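/- arXiv:1701.00254 — 2 statements merged into one kernel-verified Lean document; each statement's English description precedes it below -/
import Mathlib

section
/- The set 𝒞0 satisfies: (1) no point of 𝒞0 has x-coordinate equal to d−p0, and no point of 𝒞0 has y-coordinate equal to d−p0; (2) every point (i,j) ∈ 𝒞 with i+j = 2d−p0 belongs to 𝒞0; (3) for every point (i,j) ∈ 𝒞 with i ≥ d−p0+1, j ≥ d−p0+1 and i+j ≠ 2d−p0, exactly one of the two points (i,j) and (2d−p0−j, 2d−p0−i) (its reflection across the line x+y = 2d−p0) belongs to 𝒞0. -/
noncomputable section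

/-- Componentwise residue modulo `d`: `P% = (x mod d, y mod d)`. -/
def resd (d : ℤ) (P : ℤ × ℤ) : ℤ × ℤ := (P.1 % d, P.2 % d)

/-- `T1 = {(x,y) ∈ ℤ² : x,y ≥ 0, x+y < d}`. -/
def T1set (d : ℤ) : Set (ℤ × ℤ) := {P | 0 ≤ P.1 ∧ 0 ≤ P.2 ∧ P.1 + P.2 < d}

/-- `Y = {(x,y) ∈ ℤ² : 0 < x < d, 0 < y < d, x+y > d}`. -/
def Yset (d : ℤ) : Set (ℤ × ℤ) :=
  {P | 0 < P.1 ∧ P.1 < d ∧ 0 < P.2 ∧ P.2 < d ∧ d < P.1 + P.2}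

/-- `Y0 = {(p·P)% : P ∈ T1, (p·P)% ∉ T1}`, the image of `T_{1,2}` under
`P ↦ (p·P)%`. -/
def Y0set (d p : ℤ) : Set (ℤ × ℤ) :=
  {Q | ∃ P ∈ T1set d, resd d (p • P) ∉ T1set d ∧ Q = resd d (p • P)}

/-- The mirror reflection `m(P) = (d,d) - P`. -/
def mref (d : ℤ) (P : ℤ × ℤ) : ℤ × ℤ := (d - P.1, d - P.2)

/-- The fundamental cell `𝒞 = {(x,y) : d-p0 ≤ x ≤ d-1, d-p0 ≤ y ≤ d-1}`. -/
def Cset (d p0 : ℤ) : Set (ℤ × ℤ) :=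
  {P | d - p0 ≤ P.1 ∧ P.1 ≤ d - 1 ∧ d - p0 ≤ P.2 ∧ P.2 ≤ d - 1}

/-- `𝒞0 = 𝒞 ∩ Y0`. -/
def C0set (d p p0 : ℤ) : Set (ℤ × ℤ) := Cset d p0 ∩ Y0set d p

lemma dvd_eq_one' (d m : ℤ) (hd : 0 < d) (h : d ∣ m) (h1 : 0 < m) (h2 : m < 2 * d) :
    m = d := by
  obtain ⟨c, rfl⟩ := h
  have hc1 : 1 ≤ c := by
    by_contra hcon
    have hc : c ≤ 0 := by omega
    have : d * c ≤ 0 := mul_nonpos_of_nonneg_of_nonpos hd.le hc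
    linarith
  have hc2 : c ≤ 1 := by
    by_contra hcon
    have h3 : (2 : ℤ) ≤ c := by omega
    have h4 : d * 2 ≤ d * c := mul_le_mul_of_nonneg_left h3 hd.le
    linarith [mul_comm d (2 : ℤ)]
  have : c = 1 := le_antisymm hc2 hc1
  rw [this, mul_one]

lemma dvd_eq_two' (d m : ℤ) (hd : 0 < d) (h : d ∣ m) (h1 : d < m) (h2 : m < 3 * d) :
    m = 2 * d := by
  obtain ⟨c, rfl⟩ := h
  have hc1 : 2 ≤ c := by
    by_contra hcon
    have hc : c ≤ 1 := by omega
    have : d * c ≤ d * 1 := mul_le_mul_of_nonneg_left hc hd.le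
    linarith
  have hc2 : c ≤ 2 := by
    by_contra hcon
    have h3 : (3 : ℤ) ≤ c := by omega
    have h4 : d * 3 ≤ d * c := mul_le_mul_of_nonneg_left h3 hd.le
    linarith [mul_comm d (3 : ℤ)]
  have : c = 2 := le_antisymm hc2 hc1
  rw [this]; ring

lemma emod_modeq' (a d : ℤ) : a % d ≡ a [ZMOD d] := Int.emod_emod_of_dvd a dvd_rfl

lemma Fpos' (d p q a : ℤ) (hd : 0 < d) (hq : q * p ≡ 1 [ZMOD d])
    (ha : 0 < a) (ha' : a < d) : 0 < q * a % d := by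
  rcases (Int.emod_nonneg (q * a) hd.ne').lt_or_eq with h | h
  · exact h
  · exfalso
    have hdvd : d ∣ q * a := Int.dvd_of_emod_eq_zero h.symm
    have h1 : q * a ≡ 0 [ZMOD d] := Int.modEq_zero_iff_dvd.mpr hdvd
    have h2 : p * (q * a) ≡ p * 0 [ZMOD d] := h1.mul_left p
    have h3 : a ≡ p * (q * a) [ZMOD d] := by
      calc a = 1 * a := (one_mul a).symm
        _ ≡ q * p * a [ZMOD d] := (hq.symm.mul_right a)
        _ = p * (q * a) := by ring
    have h4 : d ∣ a := by
      have := h3.trans h2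
      rw [mul_zero] at this
      exact Int.modEq_zero_iff_dvd.mp this
    obtain ⟨c, rfl⟩ := h4
    have hc1 : 1 ≤ c := by
      by_contra hcon
      have hc : c ≤ 0 := by omega
      have : d * c ≤ 0 := mul_nonpos_of_nonneg_of_nonpos hd.le hc
      linarith
    have : d * 1 ≤ d * c := mul_le_mul_of_nonneg_left hc1 hd.le
    linarith

lemma Fneg1' (d p q a : ℤ) (hd : 0 < d) (hq : q * p ≡ 1 [ZMOD d])
    (ha : a ≡ -p [ZMOD d]) : q * a % d = d - 1 := by
  have h2 : q * a ≡ -1 [ZMOD d] := by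
    calc q * a ≡ q * (-p) [ZMOD d] := ha.mul_left q
      _ = -(q * p) := by ring
      _ ≡ -1 [ZMOD d] := hq.neg
  have h3 : q * a % d = (-1 : ℤ) % d := h2
  rw [h3]
  have h4 : (-1 : ℤ) = (d - 1) + d * (-1) := by ring
  rw [h4, Int.add_mul_emod_self_left, Int.emod_eq_of_lt (by omega) (by omega)]

lemma mem_Y0_iff' (d p q a b : ℤ) (hd : 0 < d) (hq : q * p ≡ 1 [ZMOD d])
    (ha : 0 ≤ a) (ha' : a < d) (hb : 0 ≤ b) (hb' : b < d) (hab : d < a + b) :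
    (a, b) ∈ Y0set d p ↔ q * a % d + q * b % d < d := by
  constructor
  · rintro ⟨P, hP, -, hQ⟩
    obtain ⟨x, y⟩ := P
    obtain ⟨hx, hy, hxy⟩ := hP
    simp only [Prod.smul_mk, smul_eq_mul, resd, Prod.mk.injEq] at hQ
    obtain ⟨hQ1, hQ2⟩ := hQ
    have key : ∀ z c : ℤ, 0 ≤ z → c = (p * z) % d → q * c % d ≤ z := by
      intro z c hz hc
      have m1 : c ≡ p * z [ZMOD d] := by rw [hc]; exact emod_modeq' _ _
      have m2 : q * c ≡ z [ZMOD d] := by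
        calc q * c ≡ q * (p * z) [ZMOD d] := m1.mul_left q
          _ = q * p * z := by ring
          _ ≡ 1 * z [ZMOD d] := hq.mul_right z
          _ = z := one_mul z
      have m3 : q * c % d = z % d := m2
      have m4 : z % d ≤ z := by
        conv_rhs => rw [← Int.mul_ediv_add_emod z d]
        have h5 : 0 ≤ d * (z / d) := mul_nonneg hd.le (Int.ediv_nonneg hz hd.le)
        linarith
      linarith
    have k1 := key x a hx hQ1
    have k2 := key y b hy hQ2
    linarith
  · intro hs
    have c1 : (p * (q * a % d)) % d = a := by
      have m1 : p * (q * a % d) ≡ a [ZMOD d] := by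
        calc p * (q * a % d) ≡ p * (q * a) [ZMOD d] := (emod_modeq' (q * a) d).mul_left p
          _ = q * p * a := by ring
          _ ≡ 1 * a [ZMOD d] := hq.mul_right a
          _ = a := one_mul a
      have m2 : p * (q * a % d) % d = a % d := m1
      rwa [Int.emod_eq_of_lt ha ha'] at m2
    have c2 : (p * (q * b % d)) % d = b := by
      have m1 : p * (q * b % d) ≡ b [ZMOD d] := by
        calc p * (q * b % d) ≡ p * (q * b) [ZMOD d] := (emod_modeq' (q * b) d).mul_left p
          _ = q * p * b := by ring
          _ ≡ 1 * b [ZMOD d] := hq.mul_right b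
          _ = b := one_mul b
      have m2 : p * (q * b % d) % d = b % d := m1
      rwa [Int.emod_eq_of_lt hb hb'] at m2
    have hval : resd d (p • ((q * a % d, q * b % d) : ℤ × ℤ)) = (a, b) := by
      simp only [resd, Prod.smul_mk, smul_eq_mul, Prod.mk.injEq]
      exact ⟨c1, c2⟩
    refine ⟨(q * a % d, q * b % d),
      ⟨Int.emod_nonneg _ hd.ne', Int.emod_nonneg _ hd.ne', hs⟩, ?_, hval.symm⟩
    rw [hval]
    rintro ⟨-, -, h⟩
    exact absurd h (by simp only; omega)

lemma pair_sum' (d p q a b : ℤ) (hd : 0 < d) (hq : q * p ≡ 1 [ZMOD d])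
    (ha : 0 < a) (ha' : a < d) (hb : 0 < b) (hb' : b < d)
    (hab : a + b ≡ -p [ZMOD d]) : q * a % d + q * b % d = d - 1 := by
  have m1 : q * a % d + q * b % d ≡ -1 [ZMOD d] := by
    calc q * a % d + q * b % d ≡ q * a + q * b [ZMOD d] :=
          (emod_modeq' _ _).add (emod_modeq' _ _)
      _ = q * (a + b) := by ring
      _ ≡ q * (-p) [ZMOD d] := hab.mul_left q
      _ = -(q * p) := by ring
      _ ≡ -1 [ZMOD d] := hq.neg
  have hdvd : d ∣ (q * a % d + q * b % d) + 1 := by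
    have h2 := m1.dvd
    have h3 : (q * a % d + q * b % d) + 1 = -(-1 - (q * a % d + q * b % d)) := by ring
    rw [h3]
    exact dvd_neg.mpr h2
  have hx1 := Fpos' d p q a hd hq ha ha'
  have hy1 := Fpos' d p q b hd hq hb hb'
  have hx2 := Int.emod_lt_of_pos (q * a) hd
  have hy2 := Int.emod_lt_of_pos (q * b) hd
  have := dvd_eq_one' d _ hd hdvd (by linarith) (by linarith)
  linarith

lemma s_ne' (d p p0 q a b : ℤ) (hd : 0 < d) (hq : q * p ≡ 1 [ZMOD d])
    (hpp0 : p ≡ p0 [ZMOD d]) (h6 : 6 * p0 < d)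
    (ha : d - p0 + 1 ≤ a) (ha' : a ≤ d - 1) (hb : d - p0 + 1 ≤ b) (hb' : b ≤ d - 1)
    (hne : a + b ≠ 2 * d - p0) : q * a % d + q * b % d ≠ d - 1 := by
  intro h
  have d1 : d ∣ q * a - q * a % d := (emod_modeq' (q * a) d).dvd
  have d2 : d ∣ q * b - q * b % d := (emod_modeq' (q * b) d).dvd
  have d3 : d ∣ 1 - q * p := hq.dvd
  have d4 : d ∣ p0 - p := hpp0.dvd
  have hdvd : d ∣ a + b + p0 := by
    have h5 : a + b + p0 = p * d + p * ((q * a - q * a % d) + (q * b - q * b % d))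
        + (1 - q * p) * (a + b) + (p0 - p) := by linear_combination p * h
    rw [h5]
    exact dvd_add (dvd_add (dvd_add ((dvd_refl d).mul_left p)
      ((d1.add d2).mul_left p)) (d3.mul_right _)) d4
  have := dvd_eq_two' d _ hd hdvd (by linarith) (by linarith)
  omega

/-- Properties of `𝒞0`:
(1) no point of `𝒞0` has `x`- or `y`-coordinate equal to `d - p0`;
(2) every point `(i,j) ∈ 𝒞` with `i + j = 2d - p0` lies in `𝒞0`;
(3) for `(i,j) ∈ 𝒞` with `i, j ≥ d - p0 + 1` and `i + j ≠ 2d - p0`, exactly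
one of `(i,j)` and `(2d - p0 - j, 2d - p0 - i)` lies in `𝒞0`. -/
theorem statement16 (d p p0 : ℤ) (hd : 0 < d) (hp : Prime p)
    (hp2 : 2 * d + 1 < p) (hpd : ¬ p ∣ d) (hp0 : p0 = p % d)
    (h6 : 6 * p0 < d) :
    (∀ P ∈ C0set d p p0, P.1 ≠ d - p0 ∧ P.2 ≠ d - p0) ∧
    (∀ P ∈ Cset d p0, P.1 + P.2 = 2 * d - p0 → P ∈ C0set d p p0) ∧
    (∀ P ∈ Cset d p0, d - p0 + 1 ≤ P.1 → d - p0 + 1 ≤ P.2 →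
      P.1 + P.2 ≠ 2 * d - p0 →
      Xor' (P ∈ C0set d p p0)
        (((2 * d - p0 - P.2, 2 * d - p0 - P.1) : ℤ × ℤ) ∈ C0set d p p0)) := by
  have hp0nn : 0 ≤ p0 := hp0 ▸ Int.emod_nonneg p hd.ne'
  have hp0lt : p0 < d := hp0 ▸ Int.emod_lt_of_pos p hd
  by_cases hz : p0 = 0
  · subst hz
    refine ⟨?_, ?_, ?_⟩
    · rintro P ⟨⟨h1, h2, h3, h4⟩, -⟩
      exfalso; omega
    · rintro P ⟨h1, h2, h3, h4⟩ _
      exfalso; omega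
    · rintro P ⟨h1, h2, h3, h4⟩ _ _ _
      exfalso; omega
  · have hz1 : 0 < p0 := by omega
    obtain ⟨q, v, hqv⟩ := (hp.coprime_iff_not_dvd).mpr hpd
    have hq : q * p ≡ 1 [ZMOD d] := by
      show q * p % d = 1 % d
      have hqp : q * p = 1 + d * (-v) := by linear_combination hqv
      rw [hqp, Int.add_mul_emod_self_left]
    have hpp0 : p ≡ p0 [ZMOD d] := by
      rw [hp0]; exact (emod_modeq' p d).symm
    have hm : ∀ u w : ℤ, u + w = 2 * d - p0 → u + w ≡ -p [ZMOD d] := by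
      intro u w huw
      have h1 : u + w ≡ -p0 [ZMOD d] := Int.modEq_iff_dvd.mpr ⟨-2, by rw [huw]; ring⟩
      exact h1.trans hpp0.neg.symm
    refine ⟨?_, ?_, ?_⟩
    · rintro ⟨a, b⟩ ⟨⟨h1, h2, h3, h4⟩, hY⟩
      simp only at h1 h2 h3 h4 ⊢
      have hs := (mem_Y0_iff' d p q a b hd hq (by omega) (by omega) (by omega)
        (by omega) (by omega)).mp hY
      constructor
      · intro heq
        have hma : a ≡ -p [ZMOD d] :=
          (Int.modEq_iff_dvd.mpr ⟨-1, by rw [heq]; ring⟩).trans hpp0.neg.symm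
        have hFa := Fneg1' d p q a hd hq hma
        have hFb := Fpos' d p q b hd hq (by omega) (by omega)
        omega
      · intro heq
        have hmb : b ≡ -p [ZMOD d] :=
          (Int.modEq_iff_dvd.mpr ⟨-1, by rw [heq]; ring⟩).trans hpp0.neg.symm
        have hFb := Fneg1' d p q b hd hq hmb
        have hFa := Fpos' d p q a hd hq (by omega) (by omega)
        omega
    · rintro ⟨a, b⟩ ⟨h1, h2, h3, h4⟩ hsum
      simp only at h1 h2 h3 h4 hsum
      refine ⟨⟨h1, h2, h3, h4⟩, ?_⟩
      rw [mem_Y0_iff' d p q a b hd hq (by omega) (by omega) (by omega) (by omega)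
        (by omega)]
      have := pair_sum' d p q a b hd hq (by omega) (by omega) (by omega) (by omega)
        (hm a b hsum)
      omega
    · rintro ⟨a, b⟩ ⟨h1, h2, h3, h4⟩ hA hB hne
      simp only at h1 h2 h3 h4 hA hB hne ⊢
      have memP : ((a, b) : ℤ × ℤ) ∈ C0set d p p0 ↔ q * a % d + q * b % d < d := by
        constructor
        · rintro ⟨-, hY⟩
          exact (mem_Y0_iff' d p q a b hd hq (by omega) (by omega) (by omega)
            (by omega) (by omega)).mp hY
        · intro h
          exact ⟨⟨h1, h2, h3, h4⟩, (mem_Y0_iff' d p q a b hd hq (by omega) (by omega)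
            (by omega) (by omega) (by omega)).mpr h⟩
      have memQ : ((2 * d - p0 - b, 2 * d - p0 - a) : ℤ × ℤ) ∈ C0set d p p0 ↔
          q * (2 * d - p0 - b) % d + q * (2 * d - p0 - a) % d < d := by
        constructor
        · rintro ⟨-, hY⟩
          exact (mem_Y0_iff' d p q _ _ hd hq (by omega) (by omega) (by omega)
            (by omega) (by omega)).mp hY
        · intro h
          refine ⟨⟨?_, ?_, ?_, ?_⟩, (mem_Y0_iff' d p q _ _ hd hq (by omega) (by omega)
            (by omega) (by omega) (by omega)).mpr h⟩ <;> simp only <;> omega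
      have e1 : q * a % d + q * (2 * d - p0 - a) % d = d - 1 :=
        pair_sum' d p q a (2 * d - p0 - a) hd hq (by omega) (by omega) (by omega)
          (by omega) (hm a (2 * d - p0 - a) (by ring))
      have e2 : q * b % d + q * (2 * d - p0 - b) % d = d - 1 :=
        pair_sum' d p q b (2 * d - p0 - b) hd hq (by omega) (by omega) (by omega)
          (by omega) (hm b (2 * d - p0 - b) (by ring))
      have e3 : q * a % d + q * b % d ≠ d - 1 :=
        s_ne' d p p0 q a b hd hq hpp0 h6 hA h2 hB h4 hne
      rcases lt_or_ge (q * a % d + q * b % d) d with hs | hs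
      · exact Or.inl ⟨memP.mpr hs, fun hQm => by have := memQ.mp hQm; omega⟩
      · exact Or.inr ⟨memQ.mpr (by omega), fun hPm => by have := memP.mp hPm; omega⟩
end
end

section
/- For every integer k with 0 < k ≤ p0, the number of points (x,y) ∈ 𝒞0 satisfying x+y = 2d−k or x+y = 2d−p0−k equals p0 − 1 if k = p0, and equals ((k*d2) mod p0) − 1 if k < p0. -/
noncomputable section

private def mfun (p0 d2 i : ℤ) : ℤ := (i * d2 - 1) % p0 + 1

private lemma mfun_ge (p0 d2 i : ℤ) (h : 0 < p0) : 1 ≤ mfun p0 d2 i := by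
  have := Int.emod_nonneg (i * d2 - 1) (ne_of_gt h); unfold mfun; omega

private lemma mfun_le (p0 d2 i : ℤ) (h : 0 < p0) : mfun p0 d2 i ≤ p0 := by
  have := Int.emod_lt_of_pos (i * d2 - 1) h; unfold mfun; omega

private lemma mfun_modeq (p0 d2 i : ℤ) : mfun p0 d2 i ≡ i * d2 [ZMOD p0] := by
  have h : (i*d2-1) % p0 + 1 ≡ (i*d2-1) + 1 [ZMOD p0] :=
    Int.ModEq.add_right 1 (Int.emod_emod_of_dvd _ dvd_rfl)
  have h2 : i * d2 - 1 + 1 = i * d2 := by ring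
  unfold mfun; rw [h2] at h; exact h

private lemma eq_of_modeq_small (p0 s t : ℤ) (h : s ≡ t [ZMOD p0])
    (h1 : -p0 < s - t) (h2 : s - t < p0) : s = t := by
  have hd := h.dvd
  have := Int.eq_zero_of_abs_lt_dvd hd (by rw [abs_lt]; omega)
  omega

private lemma dvd_cancel (p0 d d2 i : ℤ) (hdd2 : d * d2 ≡ 1 [ZMOD p0])
    (h : p0 ∣ i * d2) : p0 ∣ i := by
  have h1 : p0 ∣ i * d2 * d := h.mul_right d
  have h2 : p0 ∣ 1 - d * d2 := hdd2.dvd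
  have h3 : p0 ∣ i * (1 - d * d2) := h2.mul_left i
  have h4 : i * (1 - d * d2) + i * d2 * d = i := by ring
  calc p0 ∣ i * (1 - d * d2) + i * d2 * d := dvd_add h3 h1
    _ = i := h4

private lemma mfun_inv (p0 c1 c2 j : ℤ) (hp0 : 0 < p0) (h : c1 * c2 ≡ 1 [ZMOD p0])
    (hj1 : 1 ≤ j) (hj2 : j ≤ p0) : mfun p0 c2 (mfun p0 c1 j) = j := by
  apply eq_of_modeq_small p0 _ _ ?_
    (by have := mfun_ge p0 c2 (mfun p0 c1 j) hp0; omega)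
    (by have := mfun_le p0 c2 (mfun p0 c1 j) hp0; omega)
  calc mfun p0 c2 (mfun p0 c1 j) ≡ (mfun p0 c1 j) * c2 [ZMOD p0] := mfun_modeq _ _ _
    _ ≡ (j * c1) * c2 [ZMOD p0] := (mfun_modeq p0 c1 j).mul_right c2
    _ = j * (c1 * c2) := by ring
    _ ≡ j * 1 [ZMOD p0] := h.mul_left j
    _ = j := mul_one j

private lemma coord_eq (d p p0 d2 x i : ℤ) (hd : 0 < d) (hp0 : 0 < p0)
    (hp0d : p0 < d) (hpp : p % d = p0) (hdd2 : d * d2 ≡ 1 [ZMOD p0])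
    (hx0 : 0 ≤ x) (hx1 : x < d) (hi1 : 1 ≤ i) (hi2 : i ≤ p0)
    (h : (p * x) % d = d - i) :
    p0 * x = d * mfun p0 d2 i - i := by
  have hpmod : p ≡ p0 [ZMOD d] := by
    show p % d = p0 % d
    rw [hpp, Int.emod_eq_of_lt (by omega) (by omega)]
  have h1 : p0 * x ≡ d - i [ZMOD d] := by
    have := (hpmod.mul_right x).symm
    calc p0 * x ≡ p * x [ZMOD d] := this
      _ ≡ (p * x) % d [ZMOD d] := (Int.emod_emod_of_dvd _ dvd_rfl).symm
      _ = d - i := h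
  have h2 : d ∣ p0 * x + i := by
    have := h1.dvd
    obtain ⟨c, hc⟩ := this
    exact ⟨1 - c, by linarith⟩
  obtain ⟨M, hM⟩ := h2
  have hx0' : 0 ≤ p0 * x := mul_nonneg (le_of_lt hp0) hx0
  have hub : p0 * x ≤ p0 * (d - 1) := mul_le_mul_of_nonneg_left (by omega) (le_of_lt hp0)
  have hM1 : 1 ≤ M := by
    by_contra hcon
    have : d * M ≤ d * 0 := mul_le_mul_of_nonneg_left (by omega) (le_of_lt hd)
    omega
  have hM2 : M ≤ p0 := by
    have hle : d * M ≤ d * p0 := by nlinarith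
    exact le_of_mul_le_mul_left hle hd
  have h3 : M ≡ i * d2 [ZMOD p0] := by
    have e1 : M ≡ M * (d * d2) [ZMOD p0] := by
      conv_lhs => rw [← mul_one M]
      exact Int.ModEq.mul_left M hdd2.symm
    have e2 : M * (d * d2) = p0 * (x * d2) + i * d2 := by
      have : d * M = p0 * x + i := hM.symm
      linear_combination d2 * this
    have e3 : p0 * (x * d2) + i * d2 ≡ 0 + i * d2 [ZMOD p0] :=
      Int.ModEq.add_right _ ((Int.modEq_zero_iff_dvd).mpr ⟨x * d2, rfl⟩)
    calc M ≡ M * (d * d2) [ZMOD p0] := e1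
      _ = p0 * (x * d2) + i * d2 := e2
      _ ≡ 0 + i * d2 [ZMOD p0] := e3
      _ = i * d2 := by ring
  have hMm : M = mfun p0 d2 i := by
    apply eq_of_modeq_small p0 M (mfun p0 d2 i) (h3.trans (mfun_modeq p0 d2 i).symm)
    · have := mfun_le p0 d2 i hp0; omega
    · have := mfun_ge p0 d2 i hp0; omega
  rw [← hMm]; omega

private lemma coord_exists (d p p0 d2 i : ℤ) (hd : 0 < d) (hp0 : 0 < p0)
    (hp0d : p0 < d) (hpp : p % d = p0) (hdd2 : d * d2 ≡ 1 [ZMOD p0])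
    (hi1 : 1 ≤ i) (hi2 : i ≤ p0) :
    ∃ x : ℤ, 0 ≤ x ∧ p0 * x = d * mfun p0 d2 i - i ∧ (p * x) % d = d - i := by
  have hpmod : p ≡ p0 [ZMOD d] := by
    show p % d = p0 % d
    rw [hpp, Int.emod_eq_of_lt (by omega) (by omega)]
  have hdvd : p0 ∣ d * mfun p0 d2 i - i := by
    have h1 : d * mfun p0 d2 i ≡ d * (i * d2) [ZMOD p0] := (mfun_modeq p0 d2 i).mul_left d
    have h2 : d * (i * d2) ≡ i [ZMOD p0] := by
      have e : d * (i * d2) = i * (d * d2) := by ring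
      rw [e]
      calc i * (d * d2) ≡ i * 1 [ZMOD p0] := Int.ModEq.mul_left i hdd2
        _ = i := mul_one i
    have := (h1.trans h2).dvd
    obtain ⟨c, hc⟩ := this
    exact ⟨-c, by linarith⟩
  obtain ⟨x, hx⟩ := hdvd
  have hge : d * 1 ≤ d * mfun p0 d2 i :=
    mul_le_mul_of_nonneg_left (mfun_ge p0 d2 i hp0) (le_of_lt hd)
  have hx0 : 0 ≤ x := by
    by_contra hcon
    have : p0 * x ≤ p0 * (-1) := mul_le_mul_of_nonneg_left (by omega) (le_of_lt hp0)
    omega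
  refine ⟨x, hx0, hx.symm, ?_⟩
  have h1 : p * x ≡ d - i [ZMOD d] := by
    have e1 : p * x ≡ p0 * x [ZMOD d] := hpmod.mul_right x
    have e2 : p0 * x = d * mfun p0 d2 i + (- i) := by omega
    have e3 : d * mfun p0 d2 i + (-i) ≡ 0 + (-i) [ZMOD d] :=
      Int.ModEq.add_right _ ((Int.modEq_zero_iff_dvd).mpr ⟨mfun p0 d2 i, rfl⟩)
    have e4 : (0 : ℤ) + (-i) ≡ d - i [ZMOD d] := by
      show ((0:ℤ) + (-i)) % d = (d - i) % d
      have e : (d : ℤ) - i = (0 + -i) + d * 1 := by ring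
      rw [e, Int.add_mul_emod_self_left]
    calc p * x ≡ p0 * x [ZMOD d] := e1
      _ = d * mfun p0 d2 i + (-i) := e2
      _ ≡ 0 + (-i) [ZMOD d] := e3
      _ ≡ d - i [ZMOD d] := e4
  have : (p * x) % d = (d - i) % d := h1
  rw [this, Int.emod_eq_of_lt (by omega) (by omega)]

private lemma mem_Y0_iff (d p p0 d2 i j : ℤ) (hd : 0 < d) (hp0 : 0 < p0)
    (h2d : 2 * p0 < d) (hpp : p % d = p0) (hdd2 : d * d2 ≡ 1 [ZMOD p0])
    (hi1 : 1 ≤ i) (hi2 : i ≤ p0) (hj1 : 1 ≤ j) (hj2 : j ≤ p0) :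
    ((d - i, d - j) ∈ Y0set d p) ↔ mfun p0 d2 i + mfun p0 d2 j ≤ p0 := by
  have hp0d : p0 < d := by omega
  constructor
  · rintro ⟨⟨x, y⟩, ⟨hx0, hy0, hxy⟩, -, heq⟩
    simp only [resd, Prod.smul_def, smul_eq_mul, Prod.mk.injEq] at heq
    obtain ⟨hex, hey⟩ := heq
    have hx1 : x < d := by omega
    have hy1 : y < d := by omega
    have ex := coord_eq d p p0 d2 x i hd hp0 hp0d hpp hdd2 hx0 hx1 hi1 hi2 hex.symm
    have ey := coord_eq d p p0 d2 y j hd hp0 hp0d hpp hdd2 hy0 hy1 hj1 hj2 hey.symm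
    have hub : p0 * (x + y) ≤ p0 * (d - 1) := mul_le_mul_of_nonneg_left (by omega) (le_of_lt hp0)
    have hsum : p0 * (x + y) = d * (mfun p0 d2 i + mfun p0 d2 j) - (i + j) := by
      rw [mul_add, ex, ey]; ring
    have hlt : d * (mfun p0 d2 i + mfun p0 d2 j) < d * (p0 + 1) := by nlinarith
    have := lt_of_mul_lt_mul_left hlt (le_of_lt hd)
    omega
  · intro hsum
    obtain ⟨x, hx0, hx, hex⟩ := coord_exists d p p0 d2 i hd hp0 hp0d hpp hdd2 hi1 hi2
    obtain ⟨y, hy0, hy, hey⟩ := coord_exists d p p0 d2 j hd hp0 hp0d hpp hdd2 hj1 hj2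
    have hxy : x + y < d := by
      have h1 : d * (mfun p0 d2 i + mfun p0 d2 j) ≤ d * p0 :=
        mul_le_mul_of_nonneg_left hsum (le_of_lt hd)
      have h2 : p0 * (x + y) = d * (mfun p0 d2 i + mfun p0 d2 j) - (i + j) := by
        rw [mul_add, hx, hy]; ring
      have h3 : p0 * (x + y) < p0 * d := by nlinarith
      exact lt_of_mul_lt_mul_left h3 (le_of_lt hp0)
    refine ⟨(x, y), ⟨hx0, hy0, hxy⟩, ?_, ?_⟩
    · simp only [resd, Prod.smul_def, smul_eq_mul, T1set, Set.mem_setOf_eq, hex, hey]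
      rintro ⟨-, -, hcon⟩
      omega
    · simp only [resd, Prod.smul_def, smul_eq_mul, hex, hey]

/-- Write `d0 = d mod p0` and let `d2 ∈ [0, p0)` with
`d0·d2 ≡ 1 (mod p0)`.  For `0 < k ≤ p0`, the number of points `(x,y) ∈ 𝒞0`
with `x + y = 2d - k` or `x + y = 2d - p0 - k` equals `p0 - 1` if `k = p0`,
and `((k·d2) mod p0) - 1` if `k < p0`. -/
theorem statement18 (d p p0 d2 : ℤ) (hd : 0 < d) (hp : Prime p)
    (hp2 : 2 * d + 1 < p) (hpd : ¬ p ∣ d) (hp0 : p0 = p % d)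
    (h6 : 6 * p0 < d)
    (hd2a : 0 ≤ d2) (hd2b : d2 < p0)
    (hd2 : ((d % p0) * d2) % p0 = 1 % p0)
    (k : ℤ) (hk0 : 0 < k) (hkp : k ≤ p0) :
    ({P : ℤ × ℤ | P ∈ C0set d p p0 ∧
        (P.1 + P.2 = 2 * d - k ∨ P.1 + P.2 = 2 * d - p0 - k)}.ncard : ℤ) =
      if k = p0 then p0 - 1 else (k * d2) % p0 - 1 := by
  have hp0pos : 0 < p0 := lt_of_le_of_lt hd2a hd2b
  have h2d : 2 * p0 < d := by omega
  have hpp : p % d = p0 := hp0.symm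
  have hdd2' : d * d2 ≡ 1 [ZMOD p0] := by
    have h1 : d % p0 ≡ d [ZMOD p0] := Int.emod_emod_of_dvd d dvd_rfl
    have h2 : (d % p0) * d2 ≡ d * d2 [ZMOD p0] := h1.mul_right d2
    have h3 : (d % p0) * d2 ≡ 1 [ZMOD p0] := hd2
    exact h2.symm.trans h3
  set r : ℤ := if k = p0 then p0 else (k * d2) % p0 with hrdef
  have hrmod : r ≡ k * d2 [ZMOD p0] := by
    rw [hrdef]; split_ifs with h
    · subst h
      exact (Int.modEq_iff_dvd.mpr ⟨d2 - 1, by ring⟩)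
    · exact (Int.emod_emod_of_dvd _ dvd_rfl)
  have hr2 : r ≤ p0 := by
    rw [hrdef]; split_ifs with h
    · omega
    · have := Int.emod_lt_of_pos (k * d2) hp0pos; omega
  have hr1 : 1 ≤ r := by
    rw [hrdef]; split_ifs with h
    · omega
    · have hnn : 0 ≤ (k * d2) % p0 := Int.emod_nonneg _ (ne_of_gt hp0pos)
      rcases eq_or_lt_of_le hnn with he | hl
      · exfalso
        have hdv : p0 ∣ k * d2 := Int.dvd_of_emod_eq_zero he.symm
        have hk : p0 ∣ k := dvd_cancel p0 d d2 k hdd2' hdv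
        have : k = 0 := Int.eq_zero_of_abs_lt_dvd hk (by rw [abs_lt]; omega)
        omega
      · omega
  have hmk : mfun p0 d2 k = r :=
    eq_of_modeq_small p0 _ _ ((mfun_modeq p0 d2 k).trans hrmod.symm)
      (by have := mfun_ge p0 d2 k hp0pos; omega)
      (by have := mfun_le p0 d2 k hp0pos; omega)
  have hmp0 : mfun p0 d2 p0 = p0 :=
    eq_of_modeq_small p0 _ _
      ((mfun_modeq p0 d2 p0).trans (Int.modEq_iff_dvd.mpr ⟨1 - d2, by ring⟩))
      (by have := mfun_ge p0 d2 p0 hp0pos; omega)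
      (by have := mfun_le p0 d2 p0 hp0pos; omega)
  set φ : ℤ → ℤ × ℤ := fun i => (d - i, d - (if i < k then k - i else p0 + k - i)) with hφ
  set IF : Finset ℤ := (Finset.Icc 1 (p0 - 1)).filter (fun i => mfun p0 d2 i < r) with hIF
  have hSeq : {P : ℤ × ℤ | P ∈ C0set d p p0 ∧
      (P.1 + P.2 = 2 * d - k ∨ P.1 + P.2 = 2 * d - p0 - k)} = ↑(IF.image φ) := by
    ext P
    obtain ⟨a, b⟩ := P
    simp only [Set.mem_setOf_eq, C0set, Cset, Set.mem_inter_iff, Finset.coe_image,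
      Set.mem_image, Finset.mem_coe, Finset.mem_filter, Finset.mem_Icc, hIF, hφ]
    constructor
    · rintro ⟨⟨⟨hc1, hc2, hc3, hc4⟩, hY⟩, hline⟩
      obtain ⟨i, rfl⟩ : ∃ i, a = d - i := ⟨d - a, by ring⟩
      obtain ⟨j, rfl⟩ : ∃ j, b = d - j := ⟨d - b, by ring⟩
      have hi1 : 1 ≤ i := by omega
      have hi2 : i ≤ p0 := by omega
      have hj1 : 1 ≤ j := by omega
      have hj2 : j ≤ p0 := by omega
      have hm := (mem_Y0_iff d p p0 d2 i j hd hp0pos h2d hpp hdd2' hi1 hi2 hj1 hj2).mp hY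
      have hmi1 := mfun_ge p0 d2 i hp0pos
      have hmi2 := mfun_le p0 d2 i hp0pos
      have hmj1 := mfun_ge p0 d2 j hp0pos
      have hmj2 := mfun_le p0 d2 j hp0pos
      have hmsmod : mfun p0 d2 i + mfun p0 d2 j ≡ r [ZMOD p0] := by
        have h1 : mfun p0 d2 i + mfun p0 d2 j ≡ i * d2 + j * d2 [ZMOD p0] :=
          (mfun_modeq _ _ _).add (mfun_modeq _ _ _)
        have h2 : i * d2 + j * d2 ≡ k * d2 [ZMOD p0] := by
          rcases hline with h | h
          · have hij : i + j = k := by omega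
            have e : i * d2 + j * d2 = (i + j) * d2 := by ring
            rw [e, hij]
          · have hij : i + j = p0 + k := by omega
            have e : i * d2 + j * d2 = (i + j) * d2 := by ring
            rw [e, hij]
            exact Int.modEq_iff_dvd.mpr ⟨-d2, by ring⟩
        exact (h1.trans h2).trans hrmod.symm
      have hms : mfun p0 d2 i + mfun p0 d2 j = r :=
        eq_of_modeq_small p0 _ _ hmsmod (by omega) (by omega)
      have hip : i ≠ p0 := by
        intro h
        have : mfun p0 d2 i = p0 := by rw [h]; exact hmp0
        omega
      have hjp : j ≠ p0 := by
        intro h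
        have : mfun p0 d2 j = p0 := by rw [h]; exact hmp0
        omega
      refine ⟨i, ⟨⟨by omega, by omega⟩, by omega⟩, ?_⟩
      have hj : (if i < k then k - i else p0 + k - i) = j := by
        rcases hline with h | h
        · have hij : i + j = k := by omega
          rw [if_pos (by omega)]; omega
        · have hij : i + j = p0 + k := by omega
          rw [if_neg (by omega)]; omega
      rw [hj]
    · rintro ⟨i, ⟨⟨hi1, hi2⟩, hmi⟩, heq⟩
      simp only [Prod.mk.injEq] at heq
      obtain ⟨rfl, rfl⟩ := heq
      set j : ℤ := if i < k then k - i else p0 + k - i with hjdef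
      have hik : i ≠ k := by
        intro h
        rw [h, hmk] at hmi
        omega
      have hjb : 1 ≤ j ∧ j ≤ p0 - 1 := by
        rw [hjdef]; split_ifs <;> omega
      have hmi1 := mfun_ge p0 d2 i hp0pos
      have hmj1 := mfun_ge p0 d2 j hp0pos
      have hmj2 := mfun_le p0 d2 j hp0pos
      have hmj : mfun p0 d2 j = r - mfun p0 d2 i := by
        apply eq_of_modeq_small p0 _ _ ?_ (by omega) (by omega)
        have h1 : j ≡ k - i [ZMOD p0] := by
          rw [hjdef]; split_ifs
          · exact Int.ModEq.refl _
          · exact Int.modEq_iff_dvd.mpr ⟨-1, by ring⟩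
        have h2 : mfun p0 d2 j ≡ (k - i) * d2 [ZMOD p0] :=
          (mfun_modeq _ _ _).trans (h1.mul_right d2)
        have h3 : (k - i) * d2 = k * d2 - i * d2 := by ring
        have h4 : k * d2 - i * d2 ≡ r - mfun p0 d2 i [ZMOD p0] :=
          (hrmod.symm).sub (mfun_modeq p0 d2 i).symm
        exact h2.trans (h3 ▸ h4)
      have hsum : mfun p0 d2 i + mfun p0 d2 j ≤ p0 := by omega
      have hY : (d - i, d - j) ∈ Y0set d p :=
        (mem_Y0_iff d p p0 d2 i j hd hp0pos h2d hpp hdd2' (by omega) (by omega)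
          (by omega) (by omega)).mpr hsum
      refine ⟨⟨⟨by omega, by omega, by omega, by omega⟩, hY⟩, ?_⟩
      rw [hjdef]
      rcases lt_or_ge i k with h | h
      · left; rw [if_pos h]; ring
      · right; rw [if_neg (by omega)]; ring
  rw [hSeq, Set.ncard_coe_finset]
  have hinj : Set.InjOn φ IF := by
    intro x hx y hy h
    have := congrArg Prod.fst h
    simp only [hφ] at this
    omega
  rw [Finset.card_image_of_injOn hinj]
  have hd2d : d2 * d ≡ 1 [ZMOD p0] := by rwa [mul_comm] at hdd2'
  have hcard : IF.card = (Finset.Icc 1 (r - 1)).card := by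
    apply Finset.card_bij' (fun i _ => mfun p0 d2 i) (fun j _ => mfun p0 d j)
    · intro a ha
      simp only [hIF, Finset.mem_filter, Finset.mem_Icc] at ha
      simp only [Finset.mem_Icc]
      have := mfun_ge p0 d2 a hp0pos
      omega
    · intro b hb
      simp only [Finset.mem_Icc] at hb
      simp only [hIF, Finset.mem_filter, Finset.mem_Icc]
      have hb1 := mfun_ge p0 d b hp0pos
      have hb2 := mfun_le p0 d b hp0pos
      have hinv : mfun p0 d2 (mfun p0 d b) = b := mfun_inv p0 d d2 b hp0pos hdd2' (by omega) (by omega)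
      have hne : mfun p0 d b ≠ p0 := by
        intro h
        rw [h, hmp0] at hinv
        omega
      exact ⟨⟨by omega, by omega⟩, by omega⟩
    · intro a ha
      simp only [hIF, Finset.mem_filter, Finset.mem_Icc] at ha
      exact mfun_inv p0 d2 d a hp0pos hd2d (by omega) (by omega)
    · intro b hb
      simp only [Finset.mem_Icc] at hb
      exact mfun_inv p0 d d2 b hp0pos hdd2' (by omega) (by omega)
  rw [hcard, Int.card_Icc]
  rw [show r - 1 + 1 - 1 = r - 1 by ring, Int.toNat_of_nonneg (by omega)]
  rw [hrdef]
  split_ifs <;> rfl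
end
end
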